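/- In the metapopulation model, if ρ(A(0)) > 1 then F is uniformly strongly persistent with respect to the norm: there exists ε > 0 such that for every x₀ ∈ ℝ₊ⁿ with x₀ ≠ 0, liminf_{t→∞} ‖Fᵗ(x₀)‖₁ ≥ ε. -/

import Mathlib

lemma pow_entry_nonneg' {n : ℕ} (A : Matrix (Fin n) (Fin n) ℝ) (hA : ∀ i j, 0 ≤ A i j) :
    ∀ (k : ℕ) (i j : Fin n), 0 ≤ (A ^ k) i j := by
  intro k
  induction k with
  | zero => intro i j; rw [pow_zero, Matrix.one_apply]; split <;> norm_num
  | succ k ih =>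
      intro i j
      rw [pow_succ, Matrix.mul_apply]
      exact Finset.sum_nonneg fun q _ => mul_nonneg (ih i q) (hA q j)

lemma eig_bound' {n : ℕ} (hn : 0 < n) (A : Matrix (Fin n) (Fin n) ℝ) (hA : ∀ i j, 0 ≤ A i j)
    {μ : ℂ} (hμ : μ ∈ spectrum ℂ (A.map (fun a : ℝ => (a : ℂ)))) (k : ℕ) :
    ∃ i j, ‖μ‖ ^ k ≤ n * (A ^ k) i j := by
  classical
  set C := A.map (fun a : ℝ => (a : ℂ)) with hCdef
  have hCk : ∀ t : ℕ, C ^ t = (A ^ t).map (fun a : ℝ => (a : ℂ)) := by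
    intro t
    have : (A ^ t).map (algebraMap ℝ ℂ) = (A.map (algebraMap ℝ ℂ)) ^ t := by
      simp only [← RingHom.mapMatrix_apply]; exact map_pow _ A t
    exact this.symm
  have hCu : ¬IsUnit (algebraMap ℂ (Matrix (Fin n) (Fin n) ℂ) μ - C) := spectrum.mem_iff.mp hμ
  have hdet : (algebraMap ℂ (Matrix (Fin n) (Fin n) ℂ) μ - C).det = 0 := by
    by_contra h
    exact hCu ((Matrix.isUnit_iff_isUnit_det _).mpr (isUnit_iff_ne_zero.mpr h))
  obtain ⟨v, hv0, hv⟩ := Matrix.exists_mulVec_eq_zero_iff.mpr hdet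
  have heig : C.mulVec v = μ • v := by
    have h1 : (algebraMap ℂ (Matrix (Fin n) (Fin n) ℂ) μ - C).mulVec v
        = μ • v - C.mulVec v := by
      rw [Matrix.sub_mulVec, Algebra.algebraMap_eq_smul_one, Matrix.smul_mulVec,
        Matrix.one_mulVec]
    rw [h1] at hv
    exact (sub_eq_zero.mp hv).symm
  have hk : (C ^ k).mulVec v = (μ ^ k) • v := by
    induction k with
    | zero => simp [Matrix.one_mulVec]
    | succ t ih =>
        rw [pow_succ', ← Matrix.mulVec_mulVec, ih, Matrix.mulVec_smul, heig, smul_smul,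
          ← pow_succ]
  obtain ⟨i, -, hi⟩ := Finset.exists_max_image Finset.univ (fun j => ‖v j‖)
    ⟨⟨0, hn⟩, Finset.mem_univ _⟩
  have hvi : 0 < ‖v i‖ := by
    obtain ⟨j, hj⟩ := Function.ne_iff.mp hv0
    exact lt_of_lt_of_le (norm_pos_iff.mpr hj) (hi j (Finset.mem_univ _))
  have hsum : ‖μ‖ ^ k * ‖v i‖ ≤ (∑ j, (A ^ k) i j) * ‖v i‖ := by
    have h1 : ‖μ‖ ^ k * ‖v i‖ = ‖((C ^ k).mulVec v) i‖ := by
      rw [hk]; simp [Pi.smul_apply, smul_eq_mul, norm_mul, norm_pow]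
    rw [h1, Matrix.mulVec, dotProduct]
    calc ‖∑ j, (C ^ k) i j * v j‖
        ≤ ∑ j, ‖(C ^ k) i j * v j‖ := by
          exact norm_sum_le _ _
      _ ≤ ∑ j, (A ^ k) i j * ‖v i‖ := by
          apply Finset.sum_le_sum
          intro j _
          rw [norm_mul, hCk k]
          simp only [Matrix.map_apply, Complex.norm_real, Real.norm_eq_abs]
          rw [abs_of_nonneg (pow_entry_nonneg' A hA k i j)]
          exact mul_le_mul_of_nonneg_left (hi j (Finset.mem_univ _))
            (pow_entry_nonneg' A hA k i j)
      _ = (∑ j, (A ^ k) i j) * ‖v i‖ := by rw [Finset.sum_mul]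
  have hmain : ‖μ‖ ^ k ≤ ∑ j, (A ^ k) i j := le_of_mul_le_mul_right hsum hvi
  have havg : ∑ _j : Fin n, (‖μ‖ ^ k) / n ≤ ∑ j, (A ^ k) i j := by
    rw [Finset.sum_const, Finset.card_univ, Fintype.card_fin, nsmul_eq_mul,
      mul_div_cancel₀ _ (by exact_mod_cast hn.ne' : (n : ℝ) ≠ 0)]
    exact hmain
  obtain ⟨j, -, hj⟩ := Finset.exists_le_of_sum_le ⟨⟨0, hn⟩, Finset.mem_univ _⟩ havg
  refine ⟨i, j, ?_⟩
  have := (div_le_iff₀ (by exact_mod_cast hn : (0:ℝ) < n)).mp hj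
  linarith


noncomputable def specRad {n : ℕ} (A : Matrix (Fin n) (Fin n) ℝ) : ℝ :=
  sSup {r : ℝ | ∃ μ : ℂ, μ ∈ spectrum ℂ (A.map (fun a : ℝ => (a : ℂ))) ∧ r = ‖μ‖}

set_option maxHeartbeats 1000000 in
theorem stmt_13 (n : ℕ) (hn : 0 < n)
    (g : Fin n → ℝ → ℝ)
    (hg_smooth : ∀ i, ContDiff ℝ 1 (g i))
    (hg_pos : ∀ i, ∀ x : ℝ, 0 ≤ x → 0 < g i x)
    (m : Fin n → ℝ) (hm_nonneg : ∀ i, 0 ≤ m i)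
    (hf_bdd : ∀ i, ∀ x : ℝ, 0 ≤ x → g i x * x ≤ m i)
    (d : Fin n → Fin n → ℝ → ℝ)
    (hd_smooth : ∀ i j, ContDiff ℝ 1 (d i j))
    (hd_pos : ∀ i j, ∀ x : ℝ, 0 ≤ x → 0 < d i j x)
    (hd_lt1 : ∀ i j, ∀ x : ℝ, 0 ≤ x → d i j x < 1)
    (hd_colsum : ∀ i, ∀ x : ℝ, 0 ≤ x → (∑ j, d j i x) < 1)
    (F : (Fin n → ℝ) → (Fin n → ℝ))
    (hF : ∀ x : Fin n → ℝ, ∀ i, F x i = ∑ j, d i j (x j) * (g j (x j) * x j))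
    (A0 : Matrix (Fin n) (Fin n) ℝ)
    (hA0 : ∀ i j, A0 i j = d i j 0 * g j 0)
    (hρ : 1 < specRad A0) :
    ∃ ε : ℝ, 0 < ε ∧
      ∀ x₀ : Fin n → ℝ, (∀ i, 0 ≤ x₀ i) → x₀ ≠ 0 →
        ε ≤ Filter.liminf (fun t : ℕ => ∑ i, |(F^[t] x₀) i|) Filter.atTop := by
  classical
  have e0 : Fin n := ⟨0, hn⟩
  have huniv : (Finset.univ : Finset (Fin n)).Nonempty := ⟨e0, Finset.mem_univ _⟩
  have hn' : (0:ℝ) < n := by exact_mod_cast hn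
  have hn1 : (1:ℝ) ≤ n := by exact_mod_cast hn
  set M : ℝ := ∑ j, m j with hMdef
  have hmpos : ∀ j : Fin n, 0 < m j := fun j =>
    lt_of_lt_of_le (by simpa using hg_pos j 1 zero_le_one) (by simpa using hf_bdd j 1 zero_le_one)
  have hMpos : 0 < M := Finset.sum_pos (fun j _ => hmpos j) huniv
  -- basic properties of F
  have hFnn : ∀ x : Fin n → ℝ, (∀ i, 0 ≤ x i) → ∀ i, 0 ≤ F x i := by
    intro x hx i; rw [hF]
    exact Finset.sum_nonneg fun j _ => mul_nonneg (hd_pos i j _ (hx j)).le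
      (mul_nonneg (hg_pos j _ (hx j)).le (hx j))
  have hFpos : ∀ x : Fin n → ℝ, (∀ i, 0 ≤ x i) → x ≠ 0 → ∀ i, 0 < F x i := by
    intro x hx hx0 i; rw [hF]
    obtain ⟨j, hj⟩ := Function.ne_iff.mp hx0
    have hxj : 0 < x j := lt_of_le_of_ne (hx j) (Ne.symm hj)
    refine Finset.sum_pos' (fun j' _ => mul_nonneg (hd_pos i j' _ (hx j')).le
      (mul_nonneg (hg_pos j' _ (hx j')).le (hx j'))) ⟨j, Finset.mem_univ _, ?_⟩
    exact mul_pos (hd_pos i j _ (hx j)) (mul_pos (hg_pos j _ (hx j)) hxj)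
  have hFle : ∀ x : Fin n → ℝ, (∀ i, 0 ≤ x i) → ∀ i, F x i ≤ M := by
    intro x hx i; rw [hF, hMdef]
    apply Finset.sum_le_sum; intro j _
    have h1 : 0 ≤ g j (x j) * x j := mul_nonneg (hg_pos j _ (hx j)).le (hx j)
    calc d i j (x j) * (g j (x j) * x j) ≤ 1 * (g j (x j) * x j) :=
          mul_le_mul_of_nonneg_right (hd_lt1 i j _ (hx j)).le h1
      _ = g j (x j) * x j := one_mul _
      _ ≤ m j := hf_bdd j _ (hx j)
  have hIter : ∀ (x : Fin n → ℝ), (∀ i, 0 ≤ x i) → x ≠ 0 →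
      ∀ t, (∀ i, 0 ≤ F^[t] x i) ∧ F^[t] x ≠ 0 := by
    intro x hx hx0 t
    induction t with
    | zero => exact ⟨hx, hx0⟩
    | succ t ih =>
        rw [Function.iterate_succ_apply']
        refine ⟨hFnn _ ih.1, fun h => ?_⟩
        have h2 := hFpos _ ih.1 ih.2 e0
        rw [h] at h2
        simpa using h2
  -- spectral data
  have hA0pos : ∀ i j, 0 < A0 i j := fun i j => by
    rw [hA0]; exact mul_pos (hd_pos i j 0 le_rfl) (hg_pos j 0 le_rfl)
  have hA0nn : ∀ i j, 0 ≤ A0 i j := fun i j => (hA0pos i j).le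
  rw [specRad] at hρ
  have hSne : {r : ℝ | ∃ μ : ℂ, μ ∈ spectrum ℂ (A0.map (fun a : ℝ => (a : ℂ))) ∧
      r = ‖μ‖}.Nonempty := by
    by_contra h
    rw [Set.not_nonempty_iff_eq_empty] at h
    rw [h, Real.sSup_empty] at hρ; linarith
  obtain ⟨lam, hlamS, hlam⟩ := exists_lt_of_lt_csSup hSne hρ
  obtain ⟨μ, hμ, rfl⟩ := hlamS
  obtain ⟨p0, -, hp0⟩ := Finset.exists_min_image (Finset.univ : Finset (Fin n × Fin n))
    (fun p => A0 p.1 p.2) ⟨(e0, e0), Finset.mem_univ _⟩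
  set a : ℝ := A0 p0.1 p0.2 with hadef
  have ha : 0 < a := hA0pos _ _
  have hale : ∀ i j, a ≤ A0 i j := fun i j => hp0 (i, j) (Finset.mem_univ _)
  obtain ⟨k, hk⟩ := pow_unbounded_of_one_lt (2 * n / (a * a)) hlam
  set K : ℕ := k + 2 with hKdef
  have hKpos : 0 < K := by omega
  obtain ⟨p, q, hpq⟩ := eig_bound' hn A0 hA0nn hμ k
  have hApq : 2 / (a * a) ≤ (A0 ^ k) p q := by
    have h1 : 2 * (n:ℝ) / (a * a) < n * (A0 ^ k) p q := lt_of_lt_of_le hk hpq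
    have h2 : 2 * (n:ℝ) / (a * a) = n * (2 / (a * a)) := by ring
    rw [h2] at h1
    have := (mul_lt_mul_iff_right₀ hn').mp h1
    linarith
  have hAK : ∀ i j, 2 ≤ (A0 ^ K) i j := by
    intro i j
    have hrepr : A0 ^ K = A0 * A0 ^ (k + 1) := by rw [hKdef]; exact pow_succ' A0 (k+1)
    have t1 : (A0 ^ k) p q * A0 q j ≤ (A0 ^ (k+1)) p j := by
      rw [pow_succ, Matrix.mul_apply]
      exact Finset.single_le_sum (f := fun c => (A0 ^ k) p c * A0 c j)
        (fun c _ => mul_nonneg (pow_entry_nonneg' A0 hA0nn k p c) (hA0nn c j))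
        (Finset.mem_univ q)
    have t2 : A0 i p * (A0 ^ (k+1)) p j ≤ (A0 * A0 ^ (k+1)) i j := by
      rw [Matrix.mul_apply]
      exact Finset.single_le_sum (f := fun c => A0 i c * (A0 ^ (k+1)) c j)
        (fun c _ => mul_nonneg (hA0nn i c) (pow_entry_nonneg' A0 hA0nn (k+1) c j))
        (Finset.mem_univ p)
    calc (2:ℝ) = (2 / (a * a)) * (a * a) := by field_simp
      _ ≤ (A0 ^ k) p q * (a * a) := mul_le_mul_of_nonneg_right hApq (by positivity)
      _ = a * ((A0 ^ k) p q * a) := by ring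
      _ ≤ A0 i p * ((A0 ^ k) p q * A0 q j) := by
          apply mul_le_mul (hale i p) (mul_le_mul_of_nonneg_left (hale q j)
            (pow_entry_nonneg' A0 hA0nn k p q))
            (mul_nonneg (pow_entry_nonneg' A0 hA0nn k p q) ha.le) (hA0nn i p)
      _ ≤ A0 i p * (A0 ^ (k+1)) p j := mul_le_mul_of_nonneg_left t1 (hA0nn i p)
      _ ≤ (A0 * A0 ^ (k+1)) i j := t2
      _ = (A0 ^ K) i j := by rw [hrepr]
  -- the contraction ratio r
  have hKR : (0:ℝ) < K := by exact_mod_cast hKpos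
  set r : ℝ := 1 - 1/(4*(K:ℝ)) with hrdef
  have hKR1 : (1:ℝ) ≤ K := by exact_mod_cast hKpos
  have hquarter : 1/(4*(K:ℝ)) ≤ 1/4 := by
    apply one_div_le_one_div_of_le (by norm_num)
    nlinarith
  have hqpos : 0 < 1/(4*(K:ℝ)) := by positivity
  have hr0 : 0 < r := by rw [hrdef]; linarith
  have hr1 : r < 1 := by rw [hrdef]; linarith
  have hrK : (3:ℝ)/4 ≤ r ^ K := by
    have hb := one_add_mul_le_pow (a := -(1/(4*(K:ℝ)))) (by nlinarith) K
    have h1 : 1 + (K:ℝ) * (-(1/(4*(K:ℝ)))) = 3/4 := by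
      field_simp
      ring
    have h2 : (1 + -(1/(4*(K:ℝ)))) = r := by rw [hrdef]; ring
    rw [h1, h2] at hb
    exact hb
  have hBnn : ∀ i j, 0 ≤ (r • A0) i j := fun i j => by
    rw [Matrix.smul_apply, smul_eq_mul]; exact mul_nonneg hr0.le (hA0nn i j)
  have hBK : ∀ j, (3:ℝ)/2 ≤ ∑ i, ((r • A0) ^ K) i j := by
    intro j
    have hentry : ∀ i : Fin n, (3:ℝ)/2 ≤ ((r • A0) ^ K) i j := by
      intro i
      have h1 : ((r • A0) ^ K) i j = r ^ K * (A0 ^ K) i j := by rw [smul_pow]; simp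
      rw [h1]
      calc (3:ℝ)/2 = (3/4) * 2 := by norm_num
        _ ≤ r ^ K * (A0 ^ K) i j :=
            mul_le_mul hrK (hAK i j) (by norm_num) (by positivity)
    have h2 : ∑ _i : Fin n, (3:ℝ)/2 ≤ ∑ i, ((r • A0) ^ K) i j :=
      Finset.sum_le_sum fun i _ => hentry i
    have h3 : ∑ _i : Fin n, (3:ℝ)/2 = n * (3/2) := by
      rw [Finset.sum_const, Finset.card_univ, Fintype.card_fin, nsmul_eq_mul]
    nlinarith
  -- the neighborhood where F dominates r • A0
  have hevent : ∀ᶠ s in nhds (0:ℝ), ∀ pr : Fin n × Fin n,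
      r * A0 pr.1 pr.2 < d pr.1 pr.2 s * g pr.2 s := by
    rw [Filter.eventually_all]
    intro pr
    have hc : Continuous (fun s => d pr.1 pr.2 s * g pr.2 s) :=
      ((hd_smooth pr.1 pr.2).continuous).mul ((hg_smooth pr.2).continuous)
    have hlt : r * A0 pr.1 pr.2 < A0 pr.1 pr.2 := by nlinarith [hA0pos pr.1 pr.2]
    have ht : Filter.Tendsto (fun s => d pr.1 pr.2 s * g pr.2 s) (nhds 0)
        (nhds (A0 pr.1 pr.2)) := by
      rw [hA0 pr.1 pr.2]
      exact hc.tendsto 0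
    exact ht.eventually (eventually_gt_nhds hlt)
  obtain ⟨δ₁, hδ₁pos, hδ₁⟩ := Metric.eventually_nhds_iff.mp hevent
  have hdg : ∀ (s:ℝ), 0 ≤ s → s ≤ δ₁/2 → ∀ i j, r * A0 i j ≤ d i j s * g j s := by
    intro s hs0 hs i j
    have hd' : dist s 0 < δ₁ := by
      rw [Real.dist_eq, sub_zero, abs_of_nonneg hs0]; linarith
    exact (hδ₁ hd' (i, j)).le
  -- upper bound for g on [0,1]
  have hCex : ∀ j : Fin n, ∃ Cj : ℝ, ∀ s ∈ Set.Icc (0:ℝ) 1, g j s ≤ Cj := by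
    intro j
    obtain ⟨s₀, -, hs₀⟩ := isCompact_Icc.exists_isMaxOn (Set.nonempty_Icc.mpr zero_le_one)
      ((hg_smooth j).continuous.continuousOn)
    exact ⟨g j s₀, fun s hs => hs₀ hs⟩
  choose Cb hCb using hCex
  set C₁ : ℝ := ∑ j, |Cb j| with hC₁def
  have hgC : ∀ (j : Fin n) (s:ℝ), 0 ≤ s → s ≤ 1 → g j s ≤ C₁ := by
    intro j s h0 h1
    calc g j s ≤ Cb j := hCb j s ⟨h0, h1⟩
      _ ≤ |Cb j| := le_abs_self _
      _ ≤ C₁ := by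
          rw [hC₁def]
          exact Finset.single_le_sum (f := fun c => |Cb c|)
            (fun c _ => abs_nonneg _) (Finset.mem_univ j)
  set R : ℝ := max 1 ((n:ℝ) * C₁) with hRdef
  have hR1 : 1 ≤ R := le_max_left _ _
  have hup : ∀ x : Fin n → ℝ, (∀ i, 0 ≤ x i) → (∀ i, x i ≤ 1) →
      ∑ i, F x i ≤ R * ∑ i, x i := by
    intro x hx hx1
    have hsx : 0 ≤ ∑ i, x i := Finset.sum_nonneg fun i _ => hx i
    calc ∑ i, F x i ≤ ∑ _i : Fin n, (C₁ * ∑ j, x j) := by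
          apply Finset.sum_le_sum; intro i _
          rw [hF]
          calc ∑ j, d i j (x j) * (g j (x j) * x j) ≤ ∑ j, C₁ * x j := by
                apply Finset.sum_le_sum; intro j _
                calc d i j (x j) * (g j (x j) * x j) ≤ 1 * (g j (x j) * x j) :=
                      mul_le_mul_of_nonneg_right (hd_lt1 i j _ (hx j)).le
                        (mul_nonneg (hg_pos j _ (hx j)).le (hx j))
                  _ = g j (x j) * x j := one_mul _
                  _ ≤ C₁ * x j := mul_le_mul_of_nonneg_right (hgC j _ (hx j) (hx1 j)) (hx j)
            _ = C₁ * ∑ j, x j := by rw [← Finset.mul_sum]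
      _ = (n:ℝ) * (C₁ * ∑ j, x j) := by
          rw [Finset.sum_const, Finset.card_univ, Fintype.card_fin, nsmul_eq_mul]
      _ = ((n:ℝ) * C₁) * ∑ j, x j := by ring
      _ ≤ R * ∑ j, x j := mul_le_mul_of_nonneg_right (le_max_right _ _) hsx
  -- the smallness threshold δ
  have hRKpos : 0 < R ^ K := by positivity
  set δ : ℝ := min (min (δ₁/2) 1 / R ^ K) ((n:ℝ) * M) with hδdef
  have hδpos : 0 < δ := lt_min (by positivity) (mul_pos hn' hMpos)
  -- K-step growth near the origin
  have hGROW : ∀ x : Fin n → ℝ, (∀ i, 0 ≤ x i) → (∑ i, x i ≤ δ) →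
      (3:ℝ)/2 * ∑ i, x i ≤ ∑ i, F^[K] x i := by
    intro x hx hxs
    have hsx : 0 ≤ ∑ i, x i := Finset.sum_nonneg fun i _ => hx i
    have key : ∀ t, t ≤ K → (∀ i, 0 ≤ F^[t] x i) ∧ (∑ i, F^[t] x i ≤ R ^ t * ∑ i, x i)
        ∧ (∀ i, (((r • A0) ^ t).mulVec x) i ≤ F^[t] x i) := by
      intro t
      induction t with
      | zero =>
          intro _
          refine ⟨by simpa using hx, by simp, ?_⟩
          intro i; simp [Matrix.one_mulVec]
      | succ t ih =>
          intro ht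
          obtain ⟨ih1, ih2, ih3⟩ := ih (by omega)
          have hyb : ∀ i, F^[t] x i ≤ min (δ₁/2) 1 := by
            intro i
            have h1 : F^[t] x i ≤ ∑ i', F^[t] x i' :=
              Finset.single_le_sum (fun c _ => ih1 c) (Finset.mem_univ i)
            have h2 : R ^ t * ∑ i', x i' ≤ R ^ K * ∑ i', x i' :=
              mul_le_mul_of_nonneg_right (pow_le_pow_right₀ hR1 (by omega)) hsx
            have h3 : R ^ K * ∑ i', x i' ≤ R ^ K * δ :=
              mul_le_mul_of_nonneg_left hxs (by positivity)
            have h4 : R ^ K * δ ≤ min (δ₁/2) 1 := by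
              have h5 : δ ≤ min (δ₁/2) 1 / R ^ K := min_le_left _ _
              calc R ^ K * δ ≤ R ^ K * (min (δ₁/2) 1 / R ^ K) :=
                    mul_le_mul_of_nonneg_left h5 (by positivity)
                _ = min (δ₁/2) 1 := by field_simp
            linarith
          refine ⟨?_, ?_, ?_⟩
          · rw [Function.iterate_succ_apply']; exact hFnn _ ih1
          · rw [Function.iterate_succ_apply']
            calc ∑ i, F (F^[t] x) i ≤ R * ∑ i, F^[t] x i :=
                  hup _ ih1 (fun i => le_trans (hyb i) (min_le_right _ _))
              _ ≤ R * (R ^ t * ∑ i, x i) :=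
                  mul_le_mul_of_nonneg_left ih2 (by linarith)
              _ = R ^ (t+1) * ∑ i, x i := by ring
          · intro i
            rw [Function.iterate_succ_apply']
            have h5 : ∑ j, (r • A0) i j * F^[t] x j ≤ F (F^[t] x) i := by
              rw [hF]
              apply Finset.sum_le_sum
              intro j _
              have h6 : r * A0 i j ≤ d i j (F^[t] x j) * g j (F^[t] x j) :=
                hdg _ (ih1 j) (le_trans (hyb j) (min_le_left _ _)) i j
              calc (r • A0) i j * F^[t] x j = (r * A0 i j) * F^[t] x j := by
                    rw [Matrix.smul_apply, smul_eq_mul]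
                _ ≤ (d i j (F^[t] x j) * g j (F^[t] x j)) * F^[t] x j :=
                    mul_le_mul_of_nonneg_right h6 (ih1 j)
                _ = d i j (F^[t] x j) * (g j (F^[t] x j) * F^[t] x j) := by ring
            have h7 : (((r • A0) ^ (t+1)).mulVec x) i ≤ ∑ j, (r • A0) i j * F^[t] x j := by
              have h8 : ((r • A0) ^ (t+1)).mulVec x
                  = (r • A0).mulVec (((r • A0) ^ t).mulVec x) := by
                rw [Matrix.mulVec_mulVec, ← pow_succ']
              rw [h8]
              simp only [Matrix.mulVec, dotProduct]
              apply Finset.sum_le_sum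
              intro j _
              exact mul_le_mul_of_nonneg_left (ih3 j) (hBnn i j)
            linarith
    obtain ⟨hk1, -, hk3⟩ := key K le_rfl
    calc (3:ℝ)/2 * ∑ i, x i = ∑ j, (3:ℝ)/2 * x j := by rw [Finset.mul_sum]
      _ ≤ ∑ j, (∑ i, ((r • A0) ^ K) i j) * x j :=
          Finset.sum_le_sum fun j _ => mul_le_mul_of_nonneg_right (hBK j) (hx j)
      _ = ∑ j, ∑ i, ((r • A0) ^ K) i j * x j := by
          apply Finset.sum_congr rfl; intro j _; rw [Finset.sum_mul]
      _ = ∑ i, ∑ j, ((r • A0) ^ K) i j * x j := Finset.sum_comm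
      _ = ∑ i, (((r • A0) ^ K).mulVec x) i := by
          apply Finset.sum_congr rfl; intro i _
          simp [Matrix.mulVec, dotProduct]
      _ ≤ ∑ i, F^[K] x i := Finset.sum_le_sum fun i _ => hk3 i
  -- compactness away from the origin
  have hFcont : Continuous F := by
    have hFeq : F = fun x : Fin n → ℝ => fun i => ∑ j, d i j (x j) * (g j (x j) * x j) := by
      funext x i; exact hF x i
    rw [hFeq]
    apply continuous_pi
    intro i
    apply continuous_finset_sum
    intro j _
    exact ((hd_smooth i j).continuous.comp (continuous_apply j)).mul
      (((hg_smooth j).continuous.comp (continuous_apply j)).mul (continuous_apply j))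
  have hφcont : Continuous (fun x : Fin n → ℝ => ∑ i, F^[K] x i) :=
    continuous_finset_sum _ fun i _ => (continuous_apply i).comp (hFcont.iterate K)
  have hSccpt : IsCompact ((Set.Icc (0 : Fin n → ℝ) (fun _ => M)) ∩ {x | δ ≤ ∑ i, x i}) :=
    (isCompact_Icc).inter_right
      (isClosed_le continuous_const (continuous_finset_sum _ fun i _ => continuous_apply i))
  have hScne : ((Set.Icc (0 : Fin n → ℝ) (fun _ => M)) ∩ {x | δ ≤ ∑ i, x i}).Nonempty := by
    refine ⟨(fun _ => M), ⟨Set.mem_Icc.mpr ⟨fun i => hMpos.le, fun i => le_rfl⟩, ?_⟩⟩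
    show δ ≤ ∑ _i : Fin n, M
    rw [Finset.sum_const, Finset.card_univ, Fintype.card_fin, nsmul_eq_mul]
    exact min_le_right _ _
  obtain ⟨z, hzS, hz⟩ := hSccpt.exists_isMinOn hScne hφcont.continuousOn
  set c : ℝ := ∑ i, F^[K] z i with hcdef
  have hzmin : ∀ y ∈ (Set.Icc (0 : Fin n → ℝ) (fun _ => M)) ∩ {x | δ ≤ ∑ i, x i},
      c ≤ ∑ i, F^[K] y i := fun y hy => hz hy
  have hcpos : 0 < c := by
    have hz0 : ∀ i, 0 ≤ z i := fun i => (Set.mem_Icc.mp hzS.1).1 i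
    have hzne : z ≠ 0 := by
      intro h
      have h2 : δ ≤ ∑ i, z i := hzS.2
      rw [h] at h2
      simp only [Pi.zero_apply, Finset.sum_const_zero] at h2
      linarith
    obtain ⟨hit1, hit2⟩ := hIter z hz0 hzne K
    obtain ⟨i, hi⟩ := Function.ne_iff.mp hit2
    exact Finset.sum_pos' (fun i' _ => hit1 i')
      ⟨i, Finset.mem_univ _, lt_of_le_of_ne (hit1 i) (Ne.symm hi)⟩
  -- the uniform bound
  refine ⟨min δ c, lt_min hδpos hcpos, ?_⟩
  set ε : ℝ := min δ c with hεdef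
  have hεpos : 0 < ε := lt_min hδpos hcpos
  intro x₀ hx₀ hx₀ne
  set X : ℕ → (Fin n → ℝ) := fun t => F^[t] x₀ with hXdef
  have hXnn : ∀ t i, 0 ≤ X t i := fun t => (hIter x₀ hx₀ hx₀ne t).1
  have hXne : ∀ t, X t ≠ 0 := fun t => (hIter x₀ hx₀ hx₀ne t).2
  have hXM : ∀ t, 1 ≤ t → ∀ i, X t i ≤ M := by
    intro t ht i
    obtain ⟨s, rfl⟩ : ∃ s, t = s + 1 := ⟨t - 1, by omega⟩
    have h1 : X (s+1) = F (X s) := Function.iterate_succ_apply' F s x₀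
    rw [h1]; exact hFle (X s) (hXnn s) i
  have hXsum_pos : ∀ t, 0 < ∑ i, X t i := by
    intro t
    obtain ⟨i, hi⟩ := Function.ne_iff.mp (hXne t)
    exact Finset.sum_pos' (fun i' _ => hXnn t i')
      ⟨i, Finset.mem_univ _, lt_of_le_of_ne (hXnn t i) (Ne.symm hi)⟩
  have hXadd : ∀ s, X (s + K) = F^[K] (X s) := by
    intro s
    show F^[s + K] x₀ = F^[K] (F^[s] x₀)
    rw [Nat.add_comm s K]
    exact Function.iterate_add_apply F K s x₀
  have hXsumM : ∀ t, 1 ≤ t → ∑ i, X t i ≤ n * M := by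
    intro t ht
    calc ∑ i, X t i ≤ ∑ _i : Fin n, M := Finset.sum_le_sum fun i _ => hXM t ht i
      _ = n * M := by rw [Finset.sum_const, Finset.card_univ, Fintype.card_fin, nsmul_eq_mul]
  have hKS : ∀ s, 1 ≤ s → ε ≤ ∑ i, X s i → ε ≤ ∑ i, X (s + K) i := by
    intro s hs hεs
    rw [hXadd]
    by_cases hcase : ∑ i, X s i ≤ δ
    · have h1 := hGROW (X s) (hXnn s) hcase
      linarith [hXsum_pos s]
    · have hmem : X s ∈ (Set.Icc (0 : Fin n → ℝ) (fun _ => M)) ∩ {x | δ ≤ ∑ i, x i} :=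
        ⟨Set.mem_Icc.mpr ⟨fun i => hXnn s i, fun i => hXM s hs i⟩,
          (lt_of_not_ge hcase).le⟩
      have h2 := hzmin (X s) hmem
      calc ε ≤ c := min_le_right _ _
        _ ≤ ∑ i, F^[K] (X s) i := h2
  have hESC : ∀ s, 1 ≤ s → ∃ t, ε ≤ ∑ i, X (s + K * t) i := by
    intro s hs
    by_contra hno
    push_neg at hno
    have hgrow : ∀ t, ((3:ℝ)/2) ^ t * ∑ i, X s i ≤ ∑ i, X (s + K * t) i := by
      intro t
      induction t with
      | zero => simp
      | succ t ih =>
          have hlt : ∑ i, X (s + K * t) i ≤ δ :=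
            le_trans (hno t).le (min_le_left _ _)
          have h1 := hGROW (X (s + K * t)) (hXnn _) hlt
          have h2 : X (s + K * (t+1)) = F^[K] (X (s + K * t)) := by
            rw [show s + K * (t+1) = (s + K * t) + K by ring]
            exact hXadd _
          rw [h2]
          calc ((3:ℝ)/2) ^ (t+1) * ∑ i, X s i
              = (3/2) * (((3:ℝ)/2) ^ t * ∑ i, X s i) := by ring
            _ ≤ (3/2) * ∑ i, X (s + K * t) i := by nlinarith
            _ ≤ ∑ i, F^[K] (X (s + K * t)) i := h1
    obtain ⟨t, ht⟩ := pow_unbounded_of_one_lt ((n * M) / ∑ i, X s i)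
      (by norm_num : (1:ℝ) < 3/2)
    rw [div_lt_iff₀ (hXsum_pos s)] at ht
    have h4 : ∑ i, X (s + K * t) i ≤ n * M := hXsumM _ (by omega)
    nlinarith [hgrow t]
  have hPER : ∀ s, 1 ≤ s → ∃ t₀, ∀ t, t₀ ≤ t → ε ≤ ∑ i, X (s + K * t) i := by
    intro s hs
    obtain ⟨t₀, ht₀⟩ := hESC s hs
    refine ⟨t₀, fun t ht => ?_⟩
    induction t, ht using Nat.le_induction with
    | base => exact ht₀
    | succ t ht ih =>
        have h1 := hKS (s + K * t) (by omega) ih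
        rw [show s + K * (t+1) = (s + K * t) + K by ring]
        exact h1
  have hchoice : ∀ pp : ℕ, ∃ t₀, ∀ t, t₀ ≤ t → ε ≤ ∑ i, X ((pp+1) + K * t) i :=
    fun pp => hPER (pp+1) (by omega)
  choose N hN using hchoice
  set T : ℕ := 1 + K + K * ((Finset.range K).sup N) with hTdef
  have hfinal : ∀ u, T ≤ u → ε ≤ ∑ i, X u i := by
    intro u hu
    set pp := (u - 1) % K with hppdef
    set qq := (u - 1) / K with hqqdef
    have hdm : K * qq + pp = u - 1 := Nat.div_add_mod (u-1) K
    have hpK : pp < K := Nat.mod_lt _ hKpos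
    have hu1 : 1 ≤ u := by omega
    have hsup : N pp ≤ (Finset.range K).sup N := Finset.le_sup (Finset.mem_range.mpr hpK)
    have hq : N pp ≤ qq := by
      by_contra hqlt
      push_neg at hqlt
      have h1 : qq + 1 ≤ (Finset.range K).sup N := by omega
      have h2 : K * (qq+1) ≤ K * ((Finset.range K).sup N) := Nat.mul_le_mul_left _ h1
      rw [Nat.mul_succ] at h2
      omega
    have h3 := hN pp qq hq
    have hurepr : u = (pp + 1) + K * qq := by omega
    rw [hurepr]
    exact h3
  have habs : ∀ t, ∑ i, |(F^[t] x₀) i| = ∑ i, X t i := by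
    intro t
    apply Finset.sum_congr rfl
    intro i _
    exact abs_of_nonneg (hXnn t i)
  have hbdd : Filter.IsBoundedUnder (· ≤ ·) Filter.atTop
      (fun t : ℕ => ∑ i, |(F^[t] x₀) i|) := by
    refine ⟨n * M + ∑ i, |x₀ i|, ?_⟩
    rw [Filter.eventually_map]
    filter_upwards [Filter.eventually_ge_atTop 1] with t ht
    rw [habs t]
    have h1 := hXsumM t ht
    have h0 : 0 ≤ ∑ i, |x₀ i| := Finset.sum_nonneg fun i _ => abs_nonneg _
    linarith
  refine Filter.le_liminf_of_le hbdd.isCoboundedUnder_ge ?_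
  filter_upwards [Filter.eventually_ge_atTop T] with t ht
  rw [habs t]
  exact hfinal t ht
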